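/- If Γ ⊢_{NWF_N} A then Γ ⊢_{HWF_N} A; that is, every formula derivable from Γ in the natural deduction system NWF_N is derivable from Γ in the restricted Hilbert system WF_N. -/

import Mathlib

/-- Formulas of subintuitionistic propositional logic. -/
inductive Fml : Type
  | atom : ℕ → Fml
  | bot  : Fml
  | and  : Fml → Fml → Fml
  | or   : Fml → Fml → Fml
  | imp  : Fml → Fml → Fml
deriving DecidableEq

/-- `A ↔ B` abbreviates `(A → B) ∧ (B → A)`. -/
def Fml.biimp (A B : Fml) : Fml := (A.imp B).and (B.imp A)

/-- The extra axiom schemes / rules among I, C, D, Ĉ, D̂, N, N₂. -/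
inductive ExtAx : Type
  | I | C | D | Chat | Dhat | N | N2
deriving DecidableEq

/-- Theorems of the Hilbert system WF extended with the schemes/rules in `E`
(derivations with no assumptions; all rules unrestricted here). -/
inductive HThm (E : Set ExtAx) : Fml → Prop
  | ax1 (A B : Fml)   : HThm E (A.imp (A.or B))
  | ax2 (A B : Fml)   : HThm E (B.imp (A.or B))
  | ax3 (A B : Fml)   : HThm E ((A.and B).imp A)
  | ax4 (A B : Fml)   : HThm E ((A.and B).imp B)
  | ax7 (A B C : Fml) : HThm E ((A.and (B.or C)).imp ((A.and B).or (A.and C)))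
  | ax8 (A : Fml)     : HThm E (A.imp A)
  | ax14 (A : Fml)    : HThm E (Fml.bot.imp A)
  | mp {A B : Fml}    : HThm E A → HThm E (A.imp B) → HThm E B
  | af {A : Fml} (B : Fml) : HThm E A → HThm E (B.imp A)
  | tr {A B C : Fml}  : HThm E (A.imp B) → HThm E (B.imp C) → HThm E (A.imp C)
  | rc {A B C : Fml}  : HThm E (A.imp B) → HThm E (A.imp C) → HThm E (A.imp (B.and C))
  | rd {A B C : Fml}  : HThm E (A.imp C) → HThm E (B.imp C) → HThm E ((A.or B).imp C)
  | conj {A B : Fml}  : HThm E A → HThm E B → HThm E (A.and B)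
  | re {A B C D : Fml} : HThm E (A.biimp B) → HThm E (C.biimp D) →
      HThm E ((A.imp C).biimp (B.imp D))
  | axI (A B C : Fml) : ExtAx.I ∈ E →
      HThm E (((A.imp B).and (B.imp C)).imp (A.imp C))
  | axC (A B C : Fml) : ExtAx.C ∈ E →
      HThm E (((A.imp B).and (A.imp C)).imp (A.imp (B.and C)))
  | axD (A B C : Fml) : ExtAx.D ∈ E →
      HThm E (((A.imp C).and (B.imp C)).imp ((A.or B).imp C))
  | axChat (A B C : Fml) : ExtAx.Chat ∈ E →
      HThm E ((A.imp (B.and C)).imp ((A.imp B).and (A.imp C)))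
  | axDhat (A B C : Fml) : ExtAx.Dhat ∈ E →
      HThm E (((A.or B).imp C).imp ((A.imp C).and (B.imp C)))
  | ruleN {A B C D : Fml} : ExtAx.N ∈ E →
      HThm E (A.imp (B.or C)) → HThm E (C.imp (A.or D)) →
      HThm E ((A.and D).imp B) → HThm E ((C.and B).imp D) →
      HThm E ((A.imp B).biimp (C.imp D))
  | ruleN2 {A B C D : Fml} : ExtAx.N2 ∈ E →
      HThm E (C.imp (A.or D)) → HThm E ((C.and B).imp D) →
      HThm E ((A.imp B).imp (C.imp D))

/-- Restricted derivability from assumptions in the Hilbert system WF + `E`: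
besides assumptions and theorems, only the conjunction rule is unrestricted, and
modus ponens may be used only when the major premise `A → B` is a theorem
(derived with no assumptions); all other rules are confined to theorems. -/
inductive HDer (E : Set ExtAx) (Γ : Set Fml) : Fml → Prop
  | hyp {A : Fml}  : A ∈ Γ → HDer E Γ A
  | thm {A : Fml}  : HThm E A → HDer E Γ A
  | conj {A B : Fml} : HDer E Γ A → HDer E Γ B → HDer E Γ (A.and B)
  | mp {A B : Fml} : HDer E Γ A → HThm E (A.imp B) → HDer E Γ B

/-- Tags for the optional implication-introduction rules of the natural
deduction systems. -/
inductive NRule : Type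
  | impI1 | impI2 | impN | impN2 | impChat | impDhat | impAnd | impOr | impTr
deriving DecidableEq

/-- Natural deduction derivations for the system with optional rules `R`.
`Deriv R Γ A` is a derivation of `A` all of whose open assumptions lie in `Γ`. -/
inductive Deriv (R : Set NRule) : Set Fml → Fml → Type
  | hyp (Γ : Set Fml) (A : Fml) : A ∈ Γ → Deriv R Γ A
  | andI {Γ : Set Fml} {A B : Fml} :
      Deriv R Γ A → Deriv R Γ B → Deriv R Γ (A.and B)
  | andE1 {Γ : Set Fml} {A B : Fml} :
      Deriv R Γ (A.and B) → Deriv R Γ A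
  | andE2 {Γ : Set Fml} {A B : Fml} :
      Deriv R Γ (A.and B) → Deriv R Γ B
  | orI1 {Γ : Set Fml} {A : Fml} (B : Fml) :
      Deriv R Γ A → Deriv R Γ (A.or B)
  | orI2 {Γ : Set Fml} (A : Fml) {B : Fml} :
      Deriv R Γ B → Deriv R Γ (A.or B)
  | orE {Γ : Set Fml} {A B C : Fml} :
      Deriv R Γ (A.or B) → Deriv R (insert A Γ) C → Deriv R (insert B Γ) C →
      Deriv R Γ C
  | botE {Γ : Set Fml} (A : Fml) :
      Deriv R Γ Fml.bot → Deriv R Γ A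
  | impI {Γ : Set Fml} {A B : Fml} :
      Deriv R {A} B → Deriv R Γ (A.imp B)
  | impE {Γ : Set Fml} {A B : Fml} :
      Deriv R Γ A → Deriv R (∅ : Set Fml) (A.imp B) → Deriv R Γ B
  | impI1 {Γ : Set Fml} {A B D : Fml} :
      NRule.impI1 ∈ R → Deriv R {B} D → Deriv R {D} B →
      Deriv R Γ ((A.imp B).imp (A.imp D))
  | impI2 {Γ : Set Fml} {A B D : Fml} :
      NRule.impI2 ∈ R → Deriv R {B} D → Deriv R {D} B →
      Deriv R Γ ((B.imp A).imp (D.imp A))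
  | impIN {Γ : Set Fml} {A B C D : Fml} :
      NRule.impN ∈ R →
      Deriv R {A} (C.or B) → Deriv R {D} B → Deriv R {C} (A.or D) → Deriv R {B} D →
      Deriv R Γ ((A.imp B).imp (C.imp D))
  | impIN2 {Γ : Set Fml} {A B C D : Fml} :
      NRule.impN2 ∈ R →
      Deriv R {C} (A.or D) → Deriv R {B} D →
      Deriv R Γ ((A.imp B).imp (C.imp D))
  | impIChat {Γ : Set Fml} {A B : Fml} (C : Fml) :
      NRule.impChat ∈ R → Deriv R {A} B →
      Deriv R Γ ((C.imp A).imp (C.imp B))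
  | impIDhat {Γ : Set Fml} {A B : Fml} (C : Fml) :
      NRule.impDhat ∈ R → Deriv R {A} B →
      Deriv R Γ ((B.imp C).imp (A.imp C))
  | impIAnd {Γ : Set Fml} {A B C : Fml} :
      NRule.impAnd ∈ R → Deriv R Γ (A.imp B) → Deriv R Γ (A.imp C) →
      Deriv R Γ (A.imp (B.and C))
  | impIOr {Γ : Set Fml} {A B C : Fml} :
      NRule.impOr ∈ R → Deriv R Γ (A.imp C) → Deriv R Γ (B.imp C) →
      Deriv R Γ ((A.or B).imp C)
  | impITr {Γ : Set Fml} {A B C : Fml} :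
      NRule.impTr ∈ R → Deriv R Γ (A.imp B) → Deriv R Γ (B.imp C) →
      Deriv R Γ (A.imp C)

/-- `Γ ⊢ A` in the natural deduction system with optional rules `R`. -/
def NDer (R : Set NRule) (Γ : Set Fml) (A : Fml) : Prop :=
  Nonempty (Deriv R Γ A)

/-- A derivation may serve as the major premise of an elimination rule in a
normal derivation: it is an assumption or ends with an elimination rule
different from ∨E (i.e. ∧E or →E). -/
def Deriv.MajorOK : ∀ {R : Set NRule} {Γ : Set Fml} {A : Fml}, Deriv R Γ A → Prop
  | _, _, _, .hyp _ _ _ => True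
  | _, _, _, .andE1 _   => True
  | _, _, _, .andE2 _   => True
  | _, _, _, .impE _ _  => True
  | _, _, _, _          => False

/-- A derivation is normal if every major premise of an elimination rule is
either an assumption or the conclusion of an elimination rule different
from ∨E. -/
def Deriv.Normal {R : Set NRule} : ∀ {Γ : Set Fml} {A : Fml}, Deriv R Γ A → Prop
  | _, _, .hyp _ _ _ => True
  | _, _, .andI d e => d.Normal ∧ e.Normal
  | _, _, .andE1 d => d.MajorOK ∧ d.Normal
  | _, _, .andE2 d => d.MajorOK ∧ d.Normal
  | _, _, .orI1 _ d => d.Normal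
  | _, _, .orI2 _ d => d.Normal
  | _, _, .orE d e f => d.MajorOK ∧ d.Normal ∧ e.Normal ∧ f.Normal
  | _, _, .botE _ d => d.Normal
  | _, _, .impI d => d.Normal
  | _, _, .impE d e => e.MajorOK ∧ d.Normal ∧ e.Normal
  | _, _, .impI1 _ d e => d.Normal ∧ e.Normal
  | _, _, .impI2 _ d e => d.Normal ∧ e.Normal
  | _, _, .impIN _ d e f g => d.Normal ∧ e.Normal ∧ f.Normal ∧ g.Normal
  | _, _, .impIN2 _ d e => d.Normal ∧ e.Normal
  | _, _, .impIChat _ _ d => d.Normal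
  | _, _, .impIDhat _ _ d => d.Normal
  | _, _, .impIAnd _ d e => d.Normal ∧ e.Normal
  | _, _, .impIOr _ d e => d.Normal ∧ e.Normal
  | _, _, .impITr _ d e => d.Normal ∧ e.Normal

/-!
A restricted Hilbert derivation of `A` from `Γ` is the same as a theorem `G → A` with `G` a
finite conjunction of members of `Γ`. Under this reading every natural deduction rule becomes a
theorem-level manipulation: `∨E` is axiom 7 (distribution) followed by rule `RD`, an `→I`
discharging a single assumption `A` becomes a theorem `A → B`, and `→_N I` is rule `N` after
swapping the disjuncts of its first premise.
-/

namespace Fml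

/-- Finite conjunctions of members of `Γ`, with `⊥ → ⊥` as the empty conjunction. -/
inductive IsConjOf (Γ : Set Fml) : Fml → Prop
  | top : IsConjOf Γ (bot.imp bot)
  | mem {A : Fml} : A ∈ Γ → IsConjOf Γ A
  | and {A B : Fml} : IsConjOf Γ A → IsConjOf Γ B → IsConjOf Γ (A.and B)

end Fml

open Fml

section

variable {E : Set ExtAx} {Γ : Set Fml} {A B C D G : Fml}

namespace HThm

theorem and_imp_and_of_imp (h : HThm E (A.imp B)) (C : Fml) :
    HThm E ((A.and C).imp (B.and C)) :=
  rc ((ax3 _ _).tr h) (ax4 _ _)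

theorem or_comm_imp (A B : Fml) : HThm E ((A.or B).imp (B.or A)) :=
  rd (ax2 _ _) (ax1 _ _)

theorem imp_imp_of_ruleN (hN : ExtAx.N ∈ E) (hACB : HThm E (A.imp (C.or B)))
    (hDB : HThm E (D.imp B)) (hCAD : HThm E (C.imp (A.or D))) (hBD : HThm E (B.imp D)) :
    HThm E ((A.imp B).imp (C.imp D)) :=
  mp (ruleN hN (hACB.tr (or_comm_imp _ _)) hCAD ((ax4 _ _).tr hDB) ((ax4 _ _).tr hBD))
    (ax3 _ _)

end HThm

namespace Fml.IsConjOf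

theorem hDer (hG : IsConjOf Γ G) : HDer E Γ G := by
  induction hG with
  | top => exact .thm (.ax8 _)
  | mem h => exact .hyp h
  | and _ _ ih₁ ih₂ => exact .conj ih₁ ih₂

theorem hThm_of_empty (hG : IsConjOf ∅ G) : HThm E G := by
  induction hG with
  | top => exact .ax8 _
  | mem h => exact absurd h (Set.notMem_empty _)
  | and _ _ ih₁ ih₂ => exact .conj ih₁ ih₂

theorem hThm_imp_of_singleton (hG : IsConjOf {A} G) : HThm E (A.imp G) := by
  induction hG with
  | top => exact .af _ (.ax8 _)
  | mem h => rw [Set.mem_singleton_iff.mp h]; exact .ax8 _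
  | and _ _ ih₁ ih₂ => exact .rc ih₁ ih₂

theorem exists_and_imp_of_insert (hG : IsConjOf (insert A Γ) G) :
    ∃ H, IsConjOf Γ H ∧ HThm E ((H.and A).imp G) := by
  induction hG with
  | top => exact ⟨_, top, .ax3 _ _⟩
  | mem h =>
    rcases h with rfl | h
    · exact ⟨_, top, .ax4 _ _⟩
    · exact ⟨_, mem h, .ax3 _ _⟩
  | and _ _ ih₁ ih₂ =>
    obtain ⟨H₁, hH₁, t₁⟩ := ih₁
    obtain ⟨H₂, hH₂, t₂⟩ := ih₂
    exact ⟨H₁.and H₂, hH₁.and hH₂,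
      .rc ((HThm.and_imp_and_of_imp (.ax3 _ _) _).tr t₁)
        ((HThm.and_imp_and_of_imp (.ax4 _ _) _).tr t₂)⟩

end Fml.IsConjOf

namespace HDer

theorem exists_conj_imp (h : HDer E Γ A) : ∃ G, IsConjOf Γ G ∧ HThm E (G.imp A) := by
  induction h with
  | hyp h => exact ⟨_, .mem h, .ax8 _⟩
  | thm h => exact ⟨_, .top, .af _ h⟩
  | conj _ _ ih₁ ih₂ =>
    obtain ⟨G₁, hG₁, t₁⟩ := ih₁
    obtain ⟨G₂, hG₂, t₂⟩ := ih₂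
    exact ⟨G₁.and G₂, hG₁.and hG₂, .rc ((HThm.ax3 _ _).tr t₁) ((HThm.ax4 _ _).tr t₂)⟩
  | mp _ h ih =>
    obtain ⟨G, hG, t⟩ := ih
    exact ⟨G, hG, t.tr h⟩

theorem hThm_of_empty (h : HDer E ∅ A) : HThm E A := by
  obtain ⟨G, hG, t⟩ := h.exists_conj_imp
  exact hG.hThm_of_empty.mp t

theorem hThm_imp_of_singleton (h : HDer E {A} B) : HThm E (A.imp B) := by
  obtain ⟨G, hG, t⟩ := h.exists_conj_imp
  exact hG.hThm_imp_of_singleton.tr t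

theorem exists_and_imp_of_insert (h : HDer E (insert A Γ) C) :
    ∃ H, IsConjOf Γ H ∧ HThm E ((H.and A).imp C) := by
  obtain ⟨G, hG, t⟩ := h.exists_conj_imp
  obtain ⟨H, hH, t'⟩ := hG.exists_and_imp_of_insert (E := E)
  exact ⟨H, hH, t'.tr t⟩

theorem or_elim (hAB : HDer E Γ (A.or B)) (hA : HDer E (insert A Γ) C)
    (hB : HDer E (insert B Γ) C) : HDer E Γ C := by
  obtain ⟨H₁, hH₁, t₁⟩ := hA.exists_and_imp_of_insert
  obtain ⟨H₂, hH₂, t₂⟩ := hB.exists_and_imp_of_insert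
  -- both side derivations are weakened to the common context `H₁ ∧ H₂`, then ∨ is distributed
  have tA := (HThm.and_imp_and_of_imp (.ax3 H₁ H₂) A).tr t₁
  have tB := (HThm.and_imp_and_of_imp (.ax4 H₁ H₂) B).tr t₂
  exact ((hH₁.and hH₂).hDer.conj hAB).mp ((HThm.ax7 _ _ _).tr (.rd tA tB))

end HDer

theorem Deriv.toHDer (hN : ExtAx.N ∈ E) (d : Deriv {NRule.impN} Γ A) : HDer E Γ A := by
  induction d with
  | hyp _ _ h => exact .hyp h
  | andI _ _ ih₁ ih₂ => exact .conj ih₁ ih₂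
  | andE1 _ ih => exact ih.mp (.ax3 _ _)
  | andE2 _ ih => exact ih.mp (.ax4 _ _)
  | orI1 _ _ ih => exact ih.mp (.ax1 _ _)
  | orI2 _ _ ih => exact ih.mp (.ax2 _ _)
  | orE _ _ _ ih ihA ihB => exact ih.or_elim ihA ihB
  | botE _ _ ih => exact ih.mp (.ax14 _)
  | impI _ ih => exact .thm ih.hThm_imp_of_singleton
  | impE _ _ ih ihImp => exact ih.mp ihImp.hThm_of_empty
  | impIN _ _ _ _ _ ih₁ ih₂ ih₃ ih₄ =>
    exact .thm (.imp_imp_of_ruleN hN ih₁.hThm_imp_of_singleton ih₂.hThm_imp_of_singleton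
      ih₃.hThm_imp_of_singleton ih₄.hThm_imp_of_singleton)
  | impI1 h | impI2 h | impIN2 h | impIChat _ h | impIDhat _ h | impIAnd h | impIOr h
  | impITr h => exact absurd h (by simp)

end

theorem natded_to_hilbert_WFN (Γ : Set Fml) (A : Fml)
    (h : NDer {NRule.impN} Γ A) :
    HDer ({ExtAx.N} : Set ExtAx) Γ A := by
  obtain ⟨d⟩ := h
  exact d.toHDer rfl
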